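/- arXiv:1812.10664 — 3 statements merged into one kernel-verified Lean document; each statement's English description precedes it below -/
import Mathlib

section
/- Let N ≥ 2 be an integer, t₀ ≥ 1 and β ≥ 0. Then ∂_tΦ_β(x,t) = −β Φ_{β+1}(x,t) for all (x,t) ∈ ℝ^N × [0,∞), where Φ_β and Φ_{β+1} are the members of the family Φ_γ with parameters γ = β and γ = β+1 respectively. -/
open MeasureTheory Real

/-- Kummer's confluent hypergeometric function `M(a,c;z) = ∑ (a)_n/(c)_n zⁿ/n!`. -/
noncomputable def kummerM (a c z : ℝ) : ℝ :=
  ∑' n : ℕ, ((ascPochhammer ℝ n).eval a / (ascPochhammer ℝ n).eval c) * z ^ n / (n.factorial : ℝ)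

/-- The weight function
`Φ_γ(x,t) = (t₀+t)^{-γ} exp(-|x|²/(4(t₀+t))) M(N/2-γ, N/2; |x|²/(4(t₀+t)))`. -/
noncomputable def Phi (N : ℕ) (t₀ γ : ℝ) (x : EuclideanSpace ℝ (Fin N)) (t : ℝ) : ℝ :=
  (t₀ + t) ^ (-γ) * Real.exp (-‖x‖ ^ 2 / (4 * (t₀ + t))) *
    kummerM ((N : ℝ) / 2 - γ) ((N : ℝ) / 2) (‖x‖ ^ 2 / (4 * (t₀ + t)))

/-!
Write `τ = t₀ + t`, `c = N/2` and `z = |x|²/(4τ)`, so that `dz/dt = -z/τ`. Termwise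
differentiation of the (everywhere absolutely convergent, since `c > 0`) Kummer series gives
`M'(a,c;z) = (a/c) M(a+1,c+1;z)`, and the chain rule yields
`∂_t Φ_β = τ^{-β-1} e^{-z} (-β M + z M - z M')` with `M = M(c-β,c;z)`. Comparing coefficients
proves the contiguous relation `(c-a) M(a-1,c;z) = (c-a-z) M(a,c;z) + z M'(a,c;z)`, which for
`a = c - β` turns the bracket into `-β M(c-β-1,c;z)`, i.e. `∂_t Φ_β = -β Φ_{β+1}`.
-/

open Nat Polynomial Filter

theorem hasDerivAt_tsum_mul_pow {𝕜 : Type*} [RCLike 𝕜] {f : ℕ → 𝕜}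
    (hf : ∀ r : 𝕜, Summable fun n : ℕ => (n + 1) * f (n + 1) * r ^ n) (z : 𝕜) :
    HasDerivAt (fun y => ∑' n, f n * y ^ n) (∑' n : ℕ, (n + 1) * f (n + 1) * z ^ n) z := by
  set R := ‖z‖ + 1
  have hR : 0 < R := by positivity
  have hu : Summable fun n : ℕ => n * ‖f n‖ * R ^ (n - 1) := by
    rw [← summable_nat_add_iff 1]
    refine (summable_norm_iff.mpr (hf R)).congr fun n => ?_
    have hn : ‖(n : 𝕜) + 1‖ = n + 1 := by exact_mod_cast RCLike.norm_natCast (K := 𝕜) (n + 1)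
    simp [norm_mul, norm_pow, hn, abs_of_pos hR]
  have hbound : ∀ n (y : 𝕜), y ∈ Metric.ball 0 R →
      ‖f n * (n * y ^ (n - 1))‖ ≤ n * ‖f n‖ * R ^ (n - 1) := by
    intro n y hy
    rw [mem_ball_zero_iff] at hy
    rw [norm_mul, norm_mul, norm_pow, RCLike.norm_natCast, mul_left_comm, ← mul_assoc]
    gcongr
  have hsum0 : Summable fun n : ℕ => f n * (0 : 𝕜) ^ n :=
    (hasSum_single 0 fun n hn => by simp [zero_pow hn]).summable
  have h := hasDerivAt_tsum_of_isPreconnected hu Metric.isOpen_ball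
    (convex_ball (0 : 𝕜) R).isPreconnected
    (fun n y _ => (hasDerivAt_pow n y).const_mul (f n)) hbound (Metric.mem_ball_self hR) hsum0
    (y := z) (by simp [R])
  refine h.congr_deriv ?_
  rw [tsum_eq_zero_add']
  · simpa using tsum_congr fun n => by ring
  · exact (hf z).congr fun n => by push_cast; ring

noncomputable def kummerCoeff (a c : ℝ) (n : ℕ) : ℝ :=
  (ascPochhammer ℝ n).eval a / (ascPochhammer ℝ n).eval c / n !

lemma kummerM_eq_tsum (a c z : ℝ) : kummerM a c z = ∑' n, kummerCoeff a c n * z ^ n :=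
  tsum_congr fun n => by rw [kummerCoeff]; ring

@[simp] lemma kummerCoeff_zero (a c : ℝ) : kummerCoeff a c 0 = 1 := by simp [kummerCoeff]

section
variable {a c : ℝ}

lemma kummerCoeff_succ (hc : 0 < c) (n : ℕ) :
    kummerCoeff a c (n + 1) = kummerCoeff a c n * (a + n) / ((c + n) * (n + 1)) := by
  have := (ascPochhammer_pos n c hc).ne'
  rw [kummerCoeff, kummerCoeff, ascPochhammer_succ_eval, ascPochhammer_succ_eval, factorial_succ]
  push_cast
  field_simp

lemma succ_mul_kummerCoeff_succ (hc : 0 < c) (n : ℕ) :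
    (n + 1) * kummerCoeff a c (n + 1) = a / c * kummerCoeff (a + 1) (c + 1) n := by
  have := (ascPochhammer_pos n (c + 1) (by linarith)).ne'
  simp only [kummerCoeff, ascPochhammer_succ_left, eval_mul, eval_X, eval_comp, eval_add,
    eval_one, factorial_succ]
  push_cast
  field_simp

lemma kummerCoeff_contiguous (hc : 0 < c) (n : ℕ) :
    (c - a) * kummerCoeff (a - 1) c (n + 1) =
      (c - a + (n + 1)) * kummerCoeff a c (n + 1) - kummerCoeff a c n := by
  have := (ascPochhammer_pos n c hc).ne'
  have hpred :
      (ascPochhammer ℝ (n + 1)).eval (a - 1) = (a - 1) * (ascPochhammer ℝ n).eval a := by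
    simp [ascPochhammer_succ_left, eval_comp]
  rw [kummerCoeff, kummerCoeff, kummerCoeff, hpred, ascPochhammer_succ_eval,
    ascPochhammer_succ_eval, factorial_succ]
  push_cast
  field_simp
  ring

lemma summable_kummerCoeff_mul_pow (hc : 0 < c) (z : ℝ) :
    Summable fun n => kummerCoeff a c n * z ^ n := by
  refine summable_of_ratio_norm_eventually_le (r := 1 / 2) (by norm_num) ?_
  filter_upwards [eventually_ge_atTop ⌈|a|⌉₊, eventually_ge_atTop ⌈4 * |z|⌉₊] with n ha hz
  have ha : |a| ≤ n := Nat.ceil_le.mp ha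
  have hz : 4 * |z| ≤ n := Nat.ceil_le.mp hz
  have hratio : |(a + n) * z / ((c + n) * (n + 1))| ≤ 1 / 2 := by
    rw [abs_div, abs_mul, abs_of_pos (by positivity : (0 : ℝ) < (c + n) * (n + 1)),
      div_le_iff₀ (by positivity)]
    have : |a + n| ≤ 2 * n := by
      linarith [abs_add_le a n, abs_of_nonneg (n.cast_nonneg (α := ℝ))]
    nlinarith [abs_nonneg z, abs_nonneg (a + n)]
  calc ‖kummerCoeff a c (n + 1) * z ^ (n + 1)‖
      = |(a + n) * z / ((c + n) * (n + 1))| * ‖kummerCoeff a c n * z ^ n‖ := by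
        rw [kummerCoeff_succ hc, Real.norm_eq_abs, Real.norm_eq_abs, ← abs_mul]
        congr 1
        ring
    _ ≤ 1 / 2 * ‖kummerCoeff a c n * z ^ n‖ := by gcongr

lemma hasSum_kummerM (hc : 0 < c) (z : ℝ) :
    HasSum (fun n => kummerCoeff a c n * z ^ n) (kummerM a c z) := by
  rw [kummerM_eq_tsum]
  exact (summable_kummerCoeff_mul_pow hc z).hasSum

lemma hasSum_succ_mul_kummerCoeff_succ (hc : 0 < c) (z : ℝ) :
    HasSum (fun n : ℕ => (n + 1) * kummerCoeff a c (n + 1) * z ^ n)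
      (a / c * kummerM (a + 1) (c + 1) z) := by
  simpa only [succ_mul_kummerCoeff_succ hc, mul_assoc] using
    (hasSum_kummerM (by linarith : 0 < c + 1) z).mul_left (a / c)

theorem hasDerivAt_kummerM (hc : 0 < c) (z : ℝ) :
    HasDerivAt (kummerM a c) (a / c * kummerM (a + 1) (c + 1) z) z := by
  rw [funext (kummerM_eq_tsum a c), ← (hasSum_succ_mul_kummerCoeff_succ hc z).tsum_eq]
  exact hasDerivAt_tsum_mul_pow (fun r => (hasSum_succ_mul_kummerCoeff_succ hc r).summable) z

theorem kummerM_contiguous (hc : 0 < c) (z : ℝ) :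
    (c - a) * kummerM (a - 1) c z =
      (c - a - z) * kummerM a c z + z * (a / c * kummerM (a + 1) (c + 1) z) := by
  have tail (b : ℝ) :
      HasSum (fun n => kummerCoeff b c (n + 1) * z ^ (n + 1)) (kummerM b c z - 1) := by
    simpa using (hasSum_nat_add_iff' 1).mpr (hasSum_kummerM hc z)
  have shifted : HasSum (fun n => kummerCoeff a c n * z ^ (n + 1)) (z * kummerM a c z) := by
    simpa only [pow_succ, mul_left_comm z, mul_comm z] using (hasSum_kummerM hc z).mul_left z
  have derived : HasSum (fun n : ℕ => (n + 1) * kummerCoeff a c (n + 1) * z ^ (n + 1))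
      (z * (a / c * kummerM (a + 1) (c + 1) z)) := by
    simpa only [pow_succ, mul_left_comm z, mul_comm z] using
      (hasSum_succ_mul_kummerCoeff_succ hc z).mul_left z
  have lhs := (tail (a - 1)).mul_left (c - a)
  have rhs := (((tail a).mul_left (c - a)).sub shifted).add derived
  simp_rw [← mul_assoc, kummerCoeff_contiguous hc] at lhs
  linear_combination lhs.unique (rhs.congr_fun fun n => by ring)
end

theorem hasDerivAt_rpow_neg_mul_exp_mul_kummerM {c : ℝ} (hc : 0 < c) (β A : ℝ) {τ : ℝ}
    (hτ : 0 < τ) :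
    HasDerivAt (fun τ => τ ^ (-β) * exp (-(A / τ)) * kummerM (c - β) c (A / τ))
      (-β * (τ ^ (-(β + 1)) * exp (-(A / τ)) * kummerM (c - (β + 1)) c (A / τ))) τ := by
  have hz : HasDerivAt (fun τ => A / τ) (-(A / τ) / τ) τ := by
    refine ((hasDerivAt_const τ A).div (hasDerivAt_id τ) hτ.ne').congr_deriv ?_
    simp only [id]
    field_simp
    ring
  have hpow : HasDerivAt (fun τ => τ ^ (-β)) (-β * τ ^ (-β - 1)) τ :=
    hasDerivAt_rpow_const (Or.inl hτ.ne')
  have hM := (hasDerivAt_kummerM (a := c - β) hc (A / τ)).comp τ hz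
  have hcontig := kummerM_contiguous (a := c - β) hc (A / τ)
  have hsplit : τ ^ (-β) = τ ^ (-(β + 1)) * τ := by
    rw [← rpow_add_one hτ.ne']
    congr 1
    ring
  refine ((hpow.mul hz.neg.exp).mul hM).congr_deriv ?_
  simp only [Pi.mul_apply, Pi.neg_apply, Function.comp_apply]
  rw [show -β - 1 = -(β + 1) by ring, hsplit, show c - (β + 1) = c - β - 1 by ring]
  field_simp at hcontig ⊢
  linear_combination hcontig

theorem deriv_Phi_eq_neg_mul_Phi_succ_general (N : ℕ) (hN : 2 ≤ N) (t₀ β : ℝ) (ht₀ : 1 ≤ t₀)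
    (x : EuclideanSpace ℝ (Fin N)) (t : ℝ) (ht : 0 ≤ t) :
    deriv (fun s => Phi N t₀ β x s) t = -β * Phi N t₀ (β + 1) x t := by
  have hc : (0 : ℝ) < N / 2 := by
    have : (2 : ℝ) ≤ N := by exact_mod_cast hN
    linarith
  have h := (hasDerivAt_rpow_neg_mul_exp_mul_kummerM hc β (‖x‖ ^ 2 / 4)
    (by linarith : 0 < t₀ + t)).comp_const_add t₀ t
  simp only [div_div] at h
  simp only [Phi, neg_div]
  exact h.deriv

/-- `∂_t Φ_β(x,t) = -β Φ_{β+1}(x,t)` on `ℝ^N × [0,∞)`. -/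
theorem deriv_Phi_eq_neg_mul_Phi_succ (N : ℕ) (hN : 2 ≤ N) (t₀ β : ℝ) (ht₀ : 1 ≤ t₀)
    (hβ : 0 ≤ β) (x : EuclideanSpace ℝ (Fin N)) (t : ℝ) (ht : 0 ≤ t) :
    deriv (fun s => Phi N t₀ β x s) t = -β * Phi N t₀ (β + 1) x t :=
  deriv_Phi_eq_neg_mul_Phi_succ_general N hN t₀ β ht₀ x t ht
end

section
/- Let N ≥ 2 be an integer. For every β ≥ 0 there exists a positive constant C_β (depending only on N and β) such that for every t₀ ≥ 1 and all (x,t) ∈ ℝ^N × [0,∞), |Φ_β(x,t)| ≤ C_β (t₀ + t + |x|²/4)^{−β}. -/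
open MeasureTheory Real


/-- `exp(-(1/s)) ≤ s/(s+1)` for `s > 0`. -/
lemma aux_exp_le {s : ℝ} (hs : 0 < s) : Real.exp (-(1/s)) ≤ s / (s+1) := by
  rw [Real.exp_neg]
  rw [inv_le_comm₀ (Real.exp_pos _) (by positivity)]
  have h := Real.add_one_le_exp (1/s)
  calc (s/(s+1))⁻¹ = 1/s + 1 := by field_simp; ring
  _ ≤ Real.exp (1/s) := h

/-- Key step: `(1 - β/s) * s^(-β) ≤ (s+1)^(-β)` for `s > 0`, `β ≥ 0`. -/
lemma aux_step {s β : ℝ} (hs : 0 < s) (hβ : 0 ≤ β) :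
    (1 - β/s) * s ^ (-β) ≤ (s+1) ^ (-β) := by
  have h1 : 1 - β/s ≤ Real.exp (-(β/s)) := by
    have := Real.add_one_le_exp (-(β/s)); linarith
  have h2 : Real.exp (-(β/s)) = (Real.exp (-(1/s))) ^ β := by
    rw [← Real.exp_mul]; ring_nf
  have h3 : (Real.exp (-(1/s))) ^ β ≤ (s/(s+1)) ^ β :=
    Real.rpow_le_rpow (Real.exp_pos _).le (aux_exp_le hs) hβ
  have h4 : (s/(s+1)) ^ β * s ^ (-β) = (s+1) ^ (-β) := by
    rw [Real.div_rpow hs.le (by positivity), Real.rpow_neg hs.le, Real.rpow_neg (by positivity)]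
    have : s ^ β ≠ 0 := by positivity
    field_simp
  calc (1 - β/s) * s ^ (-β) ≤ (Real.exp (-(β/s))) * s ^ (-β) := by
        apply mul_le_mul_of_nonneg_right h1 (by positivity)
  _ ≤ (s/(s+1)) ^ β * s ^ (-β) := by
        apply mul_le_mul_of_nonneg_right _ (by positivity)
        rw [h2] at *; exact h3
  _ = (s+1) ^ (-β) := h4

/-- Decay of the Pochhammer coefficient ratio. -/
lemma coeff_bound (c β : ℝ) (hc : 1 ≤ c) (hβ : 0 ≤ β) :
    ∃ C : ℝ, 0 < C ∧ ∀ n : ℕ,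
      |(ascPochhammer ℝ n).eval (c - β)| / (ascPochhammer ℝ n).eval c
        ≤ C * ((1:ℝ) + n) ^ (-β) := by
  set a := c - β with ha
  set r : ℕ → ℝ := fun n => |(ascPochhammer ℝ n).eval a| / (ascPochhammer ℝ n).eval c with hr
  have hc0 : (0:ℝ) < c := lt_of_lt_of_le one_pos hc
  have hden : ∀ n : ℕ, 0 < (ascPochhammer ℝ n).eval c := fun n => ascPochhammer_pos n c hc0
  have hrnn : ∀ n, 0 ≤ r n := fun n => div_nonneg (abs_nonneg _) (hden n).le
  have hrec : ∀ n : ℕ, r (n+1) = r n * (|a + n| / (c + n)) := by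
    intro n
    simp only [hr, ascPochhammer_succ_eval, abs_mul]
    rw [div_mul_div_comm]
  set m := Nat.ceil β with hmdef
  have hm : β ≤ m := Nat.le_ceil β
  set K : ℝ := (∑ k ∈ Finset.range (m+1), r k * (c + k) ^ β) + 1 with hKdef
  have hK : 0 < K := by
    have : (0:ℝ) ≤ ∑ k ∈ Finset.range (m+1), r k * (c + k) ^ β :=
      Finset.sum_nonneg fun k _ => mul_nonneg (hrnn k) (by positivity)
    linarith
  have hsmall : ∀ n : ℕ, n ≤ m → r n ≤ K * (c + n) ^ (-β) := by
    intro n hn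
    have hcn : (0:ℝ) < c + n := by positivity
    have h1 : r n * (c + n) ^ β ≤ K := by
      have := Finset.single_le_sum (f := fun k : ℕ => r k * (c + (k:ℝ)) ^ β)
        (fun k _ => mul_nonneg (hrnn k) (by positivity))
        (Finset.mem_range.mpr (by omega) : n ∈ Finset.range (m+1))
      have h0 : r n * (c + (n:ℝ)) ^ β ≤ ∑ k ∈ Finset.range (m+1), r k * (c + (k:ℝ)) ^ β := by
        simpa using this
      rw [hKdef]; linarith
    have h2 : r n = (r n * (c + n) ^ β) * (c + n) ^ (-β) := by
      rw [Real.rpow_neg hcn.le, mul_assoc, mul_inv_cancel₀ (by positivity), mul_one]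
    rw [h2]
    exact mul_le_mul_of_nonneg_right h1 (by positivity)
  have hmain : ∀ n : ℕ, r n ≤ K * (c + n) ^ (-β) := by
    intro n
    induction n with
    | zero => exact hsmall 0 (Nat.zero_le _)
    | succ n ih =>
      by_cases hnm : n + 1 ≤ m
      · exact hsmall _ hnm
      · have hmn : m ≤ n := by omega
        have hn : β ≤ (n:ℝ) := hm.trans (by exact_mod_cast hmn)
        have hcn : (0:ℝ) < c + n := by positivity
        have h1 : |a + (n:ℝ)| = (c + n) - β := by
          rw [abs_of_nonneg (by rw [ha]; linarith), ha]; ring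
        have h2 : r (n+1) = r n * (1 - β/(c+n)) := by
          rw [hrec n, h1]
          congr 1
          field_simp
        have hfac : (0:ℝ) ≤ 1 - β/(c+n) := by
          rw [sub_nonneg, div_le_one hcn]; linarith
        calc r (n+1) = r n * (1 - β/(c+n)) := h2
        _ ≤ (K * (c+n) ^ (-β)) * (1 - β/(c+n)) := mul_le_mul_of_nonneg_right ih hfac
        _ = K * ((1 - β/(c+n)) * (c+n) ^ (-β)) := by ring
        _ ≤ K * ((c+n+1) ^ (-β)) := mul_le_mul_of_nonneg_left (aux_step hcn hβ) hK.le
        _ = K * (c + (n+1:ℕ)) ^ (-β) := by congr 2; push_cast; ring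
  refine ⟨K, hK, fun n => (hmain n).trans ?_⟩
  apply mul_le_mul_of_nonneg_left _ hK.le
  exact Real.rpow_le_rpow_of_nonpos (by positivity) (by linarith) (by linarith)

/-- Exponential series with polynomially decaying weights. -/
lemma poisson_bound (β : ℝ) (hβ : 0 ≤ β) :
    ∃ C : ℝ, 0 < C ∧ ∀ z : ℝ, 0 ≤ z →
      ∑' n : ℕ, ((1:ℝ) + n) ^ (-β) * z ^ n / n.factorial
        ≤ C * Real.exp z * (1+z) ^ (-β) := by
  set ε : ℝ := (1 - Real.log 2)/2 with hε
  have hlog2 : (0:ℝ) < Real.log 2 := Real.log_pos (by norm_num)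
  have hε0 : 0 < ε := by
    have h2 : Real.log 2 < 1 := by
      have := Real.log_two_lt_d9
      linarith
    rw [hε]; linarith
  set C₃ : ℝ := ((β/ε) ^ β + 1) * Real.exp ε with hC₃
  have hrpnn : (0:ℝ) ≤ (β/ε) ^ β := Real.rpow_nonneg (by positivity) β
  have hC₃0 : 0 < C₃ := by
    rw [hC₃]; positivity
  have hgrow : ∀ z : ℝ, 0 ≤ z → (1+z) ^ β ≤ C₃ * Real.exp (ε*z) := by
    intro z hz
    have key : (1+z) ^ β ≤ ((β/ε) ^ β + 1) * Real.exp (ε*(1+z)) := by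
      rcases eq_or_lt_of_le hβ with h0 | h0
      · rw [← h0]
        simp only [Real.rpow_zero]
        have h1 : (1:ℝ) ≤ Real.exp (ε*(1+z)) := Real.one_le_exp (by positivity)
        nlinarith
      · set t : ℝ := ε*(1+z)/β with htdef
        have ht0 : 0 ≤ t := by positivity
        have ht : t ≤ Real.exp t := by
          have := Real.add_one_le_exp t; linarith
        have h1 : 1 + z = (β/ε) * t := by
          rw [htdef]; field_simp
        have h2 : 1 + z ≤ (β/ε) * Real.exp t :=
          h1.le.trans (mul_le_mul_of_nonneg_left ht (by positivity))
        have h3 : (1+z) ^ β ≤ ((β/ε) * Real.exp t) ^ β :=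
          Real.rpow_le_rpow (by positivity) h2 hβ
        have h4 : ((β/ε) * Real.exp t) ^ β = (β/ε) ^ β * Real.exp (ε*(1+z)) := by
          rw [Real.mul_rpow (by positivity) (Real.exp_pos t).le, ← Real.exp_mul]
          congr 2
          rw [htdef]; field_simp
        nlinarith [Real.exp_pos (ε*(1+z)), h3, h4.le]
    calc (1+z) ^ β ≤ ((β/ε) ^ β + 1) * Real.exp (ε*(1+z)) := key
    _ = C₃ * Real.exp (ε*z) := by
        rw [hC₃, mul_assoc, ← Real.exp_add]; ring_nf
  refine ⟨(2:ℝ) ^ β + C₃, by positivity, fun z hz => ?_⟩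
  have hexp : ∀ w : ℝ, ∑' n : ℕ, w ^ n / (n.factorial : ℝ) = Real.exp w := by
    intro w
    rw [Real.exp_eq_exp_ℝ, NormedSpace.exp_eq_tsum_div]
  set b1 : ℕ → ℝ := fun n => (2:ℝ) ^ β * (1+z) ^ (-β) * (z ^ n / n.factorial) with hb1
  set b2 : ℕ → ℝ := fun n => Real.exp (z/2 * Real.log 2) * ((z/2) ^ n / n.factorial) with hb2
  have hb1nn : ∀ n, 0 ≤ b1 n := fun n => by rw [hb1]; positivity
  have hb2nn : ∀ n, 0 ≤ b2 n := fun n => by rw [hb2]; positivity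
  have hterm : ∀ n : ℕ, ((1:ℝ) + n) ^ (-β) * z ^ n / n.factorial ≤ b1 n + b2 n := by
    intro n
    have hfn : (0:ℝ) < n.factorial := by positivity
    rcases le_or_gt (z/2) (n:ℝ) with h | h
    · have h1 : (1+z)/2 ≤ 1 + (n:ℝ) := by linarith
      have h2 : ((1:ℝ)+n) ^ (-β) ≤ ((1+z)/2) ^ (-β) :=
        Real.rpow_le_rpow_of_nonpos (by positivity) h1 (by linarith)
      have h3 : ((1+z)/2) ^ (-β) = (2:ℝ) ^ β * (1+z) ^ (-β) := by
        rw [Real.div_rpow (by positivity) (by norm_num), Real.rpow_neg (by positivity : (0:ℝ) ≤ 1+z),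
          Real.rpow_neg (by norm_num : (0:ℝ) ≤ 2)]
        have h2b : (2:ℝ) ^ β ≠ 0 := by positivity
        field_simp
      have : ((1:ℝ)+n) ^ (-β) * z ^ n / n.factorial ≤ b1 n := by
        rw [hb1, mul_div_assoc]
        apply mul_le_mul_of_nonneg_right (h2.trans_eq h3) (by positivity)
      linarith [hb2nn n]
    · have h1 : ((1:ℝ)+n) ^ (-β) ≤ 1 :=
        Real.rpow_le_one_of_one_le_of_nonpos (by simp [Nat.cast_nonneg]) (by linarith)
      have h2 : z ^ n = 2 ^ n * (z/2) ^ n := by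
        rw [← mul_pow]; ring_nf
      have h3 : (2:ℝ) ^ n ≤ Real.exp (z/2 * Real.log 2) := by
        have : (2:ℝ) ^ n = Real.exp ((n:ℝ) * Real.log 2) := by
          rw [Real.exp_nat_mul, Real.exp_log (by norm_num : (0:ℝ) < 2)]
        rw [this]
        exact Real.exp_le_exp.mpr (by nlinarith)
      have : ((1:ℝ)+n) ^ (-β) * z ^ n / n.factorial ≤ b2 n := by
        rw [hb2]
        calc ((1:ℝ)+n) ^ (-β) * z ^ n / n.factorial ≤ 1 * z ^ n / n.factorial := by
              apply div_le_div_of_nonneg_right _ hfn.le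
              exact mul_le_mul_of_nonneg_right h1 (by positivity)
        _ = 2 ^ n * ((z/2) ^ n / n.factorial) := by rw [h2]; ring
        _ ≤ Real.exp (z/2 * Real.log 2) * ((z/2) ^ n / n.factorial) := by
              apply mul_le_mul_of_nonneg_right h3 (by positivity)
      linarith [hb1nn n]
  have hsum1 : Summable b1 := (Real.summable_pow_div_factorial z).mul_left _
  have hsum2 : Summable b2 := (Real.summable_pow_div_factorial (z/2)).mul_left _
  have hsumb : Summable (fun n => b1 n + b2 n) := hsum1.add hsum2
  have htermnn : ∀ n : ℕ, 0 ≤ ((1:ℝ) + n) ^ (-β) * z ^ n / n.factorial := by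
    intro n; positivity
  have hsumterm : Summable (fun n : ℕ => ((1:ℝ) + n) ^ (-β) * z ^ n / n.factorial) :=
    Summable.of_nonneg_of_le htermnn hterm hsumb
  calc ∑' n : ℕ, ((1:ℝ) + n) ^ (-β) * z ^ n / n.factorial
      ≤ ∑' n : ℕ, (b1 n + b2 n) := Summable.tsum_le_tsum hterm hsumterm hsumb
  _ = (∑' n : ℕ, b1 n) + ∑' n : ℕ, b2 n := Summable.tsum_add hsum1 hsum2
  _ = (2:ℝ) ^ β * (1+z) ^ (-β) * Real.exp z
      + Real.exp (z/2 * Real.log 2) * Real.exp (z/2) := by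
      rw [hb1, hb2, tsum_mul_left, tsum_mul_left, hexp, hexp]
  _ ≤ (2:ℝ) ^ β * (1+z) ^ (-β) * Real.exp z + C₃ * Real.exp z * (1+z) ^ (-β) := by
      have h5 : Real.exp (z/2 * Real.log 2) * Real.exp (z/2) = Real.exp z * Real.exp (-(ε*z)) := by
        rw [← Real.exp_add, ← Real.exp_add, hε]; ring_nf
      have h6 : Real.exp (-(ε*z)) ≤ C₃ * ((1+z) ^ β)⁻¹ := by
        have hA : (0:ℝ) < Real.exp (ε*z) := Real.exp_pos _
        have hB : (0:ℝ) < (1+z) ^ β := by positivity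
        have h7 : (1+z) ^ β / Real.exp (ε*z) ≤ C₃ := by
          rw [div_le_iff₀ hA]
          nlinarith [hgrow z hz, hA, hC₃0]
        calc Real.exp (-(ε*z)) = ((1+z) ^ β / Real.exp (ε*z)) * ((1+z) ^ β)⁻¹ := by
              rw [Real.exp_neg]; field_simp
        _ ≤ C₃ * ((1+z) ^ β)⁻¹ := mul_le_mul_of_nonneg_right h7 (by positivity)
      have h8 : Real.exp (z/2 * Real.log 2) * Real.exp (z/2) ≤ C₃ * Real.exp z * (1+z) ^ (-β) := by
        rw [h5, Real.rpow_neg (by positivity : (0:ℝ) ≤ 1+z)]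
        calc Real.exp z * Real.exp (-(ε*z)) ≤ Real.exp z * (C₃ * ((1+z) ^ β)⁻¹) :=
              mul_le_mul_of_nonneg_left h6 (Real.exp_pos z).le
        _ = C₃ * Real.exp z * ((1+z) ^ β)⁻¹ := by ring
      linarith
  _ = ((2:ℝ) ^ β + C₃) * Real.exp z * (1+z) ^ (-β) := by ring

/-- Upper bound: `|Φ_β(x,t)| ≤ C_β (t₀+t+|x|²/4)^{-β}` with `C_β` depending only on `N, β`. -/
theorem Phi_upper_bound (N : ℕ) (hN : 2 ≤ N) (β : ℝ) (hβ : 0 ≤ β) :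
    ∃ C : ℝ, 0 < C ∧ ∀ t₀ : ℝ, 1 ≤ t₀ → ∀ (x : EuclideanSpace ℝ (Fin N)) (t : ℝ), 0 ≤ t →
      |Phi N t₀ β x t| ≤ C * (t₀ + t + ‖x‖ ^ 2 / 4) ^ (-β) := by
  set c : ℝ := (N:ℝ)/2 with hcdef
  have hc : 1 ≤ c := by
    rw [hcdef]
    have h2 : (2:ℝ) ≤ (N:ℝ) := by exact_mod_cast hN
    linarith
  have hc0 : (0:ℝ) < c := lt_of_lt_of_le one_pos hc
  obtain ⟨C₁, hC₁, hA⟩ := coeff_bound c β hc hβ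
  obtain ⟨C₂, hC₂, hB⟩ := poisson_bound β hβ
  refine ⟨C₁ * C₂, by positivity, fun t₀ ht₀ x t ht => ?_⟩
  set s : ℝ := t₀ + t with hsdef
  have hs0 : (0:ℝ) < s := by rw [hsdef]; linarith
  set z : ℝ := ‖x‖^2 / (4*s) with hzdef
  have hz0 : 0 ≤ z := by rw [hzdef]; positivity
  have hPhi : Phi N t₀ β x t = s ^ (-β) * Real.exp (-z) * kummerM (c - β) c z := by
    rw [Phi, hzdef, hsdef, neg_div]
  -- bound on the Kummer function
  set f : ℕ → ℝ := fun n =>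
    ((ascPochhammer ℝ n).eval (c - β) / (ascPochhammer ℝ n).eval c) * z ^ n / n.factorial
    with hfdef
  have hden : ∀ n : ℕ, 0 < (ascPochhammer ℝ n).eval c := fun n => ascPochhammer_pos n c hc0
  have habs : ∀ n : ℕ, |f n|
      = |(ascPochhammer ℝ n).eval (c - β)| / (ascPochhammer ℝ n).eval c * z ^ n / n.factorial := by
    intro n
    rw [hfdef]
    rw [abs_div, abs_mul, abs_div, abs_of_pos (hden n), abs_of_nonneg (pow_nonneg hz0 n),
      Nat.abs_cast]
  have hle : ∀ n : ℕ, |f n| ≤ C₁ * (((1:ℝ) + n) ^ (-β) * z ^ n / n.factorial) := by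
    intro n
    rw [habs n]
    have h1 := hA n
    have h2 : (0:ℝ) ≤ z ^ n / n.factorial := by positivity
    calc |(ascPochhammer ℝ n).eval (c - β)| / (ascPochhammer ℝ n).eval c * z ^ n / n.factorial
        = (|(ascPochhammer ℝ n).eval (c - β)| / (ascPochhammer ℝ n).eval c) * (z ^ n / n.factorial) := by
          ring
    _ ≤ (C₁ * ((1:ℝ) + n) ^ (-β)) * (z ^ n / n.factorial) := mul_le_mul_of_nonneg_right h1 h2
    _ = C₁ * (((1:ℝ) + n) ^ (-β) * z ^ n / n.factorial) := by ring
  have hg : Summable (fun n : ℕ => ((1:ℝ) + n) ^ (-β) * z ^ n / n.factorial) := by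
    apply Summable.of_nonneg_of_le (fun n => by positivity)
      (fun n => ?_) (Real.summable_pow_div_factorial z)
    have h1 : ((1:ℝ)+n) ^ (-β) ≤ 1 :=
      Real.rpow_le_one_of_one_le_of_nonpos (by simp [Nat.cast_nonneg]) (by linarith)
    calc ((1:ℝ) + n) ^ (-β) * z ^ n / n.factorial
        ≤ 1 * z ^ n / n.factorial := by
          apply div_le_div_of_nonneg_right _ (by positivity : (0:ℝ) ≤ (n.factorial:ℝ))
          exact mul_le_mul_of_nonneg_right h1 (by positivity)
    _ = z ^ n / n.factorial := by ring
  have hgb : Summable (fun n : ℕ => C₁ * (((1:ℝ) + n) ^ (-β) * z ^ n / n.factorial)) :=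
    hg.mul_left _
  have hsf : Summable (fun n => |f n|) :=
    Summable.of_nonneg_of_le (fun n => abs_nonneg _) hle hgb
  have hM : |kummerM (c - β) c z| ≤ C₁ * (C₂ * Real.exp z * (1+z) ^ (-β)) := by
    have h1 : |∑' n, f n| ≤ ∑' n, |f n| := by
      have := norm_tsum_le_tsum_norm (f := f) (by simpa [Real.norm_eq_abs] using hsf)
      simpa [Real.norm_eq_abs] using this
    have h2 : ∑' n, |f n| ≤ ∑' n : ℕ, C₁ * (((1:ℝ) + n) ^ (-β) * z ^ n / n.factorial) :=
      Summable.tsum_le_tsum hle hsf hgb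
    have h3 : ∑' n : ℕ, C₁ * (((1:ℝ) + n) ^ (-β) * z ^ n / n.factorial)
        = C₁ * ∑' n : ℕ, ((1:ℝ) + n) ^ (-β) * z ^ n / n.factorial := tsum_mul_left
    have h4 : C₁ * ∑' n : ℕ, ((1:ℝ) + n) ^ (-β) * z ^ n / n.factorial
        ≤ C₁ * (C₂ * Real.exp z * (1+z) ^ (-β)) :=
      mul_le_mul_of_nonneg_left (hB z hz0) hC₁.le
    rw [kummerM]
    calc |∑' n, f n| ≤ ∑' n, |f n| := h1
    _ ≤ _ := h2.trans (h3.le.trans h4)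
  -- assemble
  have hsz : s * (1 + z) = t₀ + t + ‖x‖ ^ 2 / 4 := by
    rw [hzdef, hsdef]
    field_simp
  have hrp : (0:ℝ) < s ^ (-β) := Real.rpow_pos_of_pos hs0 _
  calc |Phi N t₀ β x t| = s ^ (-β) * Real.exp (-z) * |kummerM (c - β) c z| := by
        rw [hPhi, abs_mul, abs_mul, abs_of_pos hrp, abs_of_pos (Real.exp_pos _)]
  _ ≤ s ^ (-β) * Real.exp (-z) * (C₁ * (C₂ * Real.exp z * (1+z) ^ (-β))) :=
        mul_le_mul_of_nonneg_left hM (by positivity)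
  _ = C₁ * C₂ * (Real.exp (-z) * Real.exp z) * (s ^ (-β) * (1+z) ^ (-β)) := by ring
  _ = C₁ * C₂ * (s ^ (-β) * (1+z) ^ (-β)) := by
        rw [← Real.exp_add, neg_add_cancel, Real.exp_zero, mul_one]
  _ = C₁ * C₂ * (s * (1+z)) ^ (-β) := by
        rw [Real.mul_rpow hs0.le (by positivity)]
  _ = C₁ * C₂ * (t₀ + t + ‖x‖ ^ 2 / 4) ^ (-β) := by rw [hsz]
end

section
/- Let N ≥ 2 be an integer. For every β with 0 ≤ β < N/2 there exists a positive constant c_β (depending only on N and β) such that for every t₀ ≥ 1 and all (x,t) ∈ ℝ^N × [0,∞), Φ_β(x,t) ≥ c_β (t₀ + t + |x|²/4)^{−β}; in particular Φ_β is strictly positive. -/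
open MeasureTheory Real

/-!
Write `e^{-z} M(c - β, c; z) = ∑ rₙ e^{-z} zⁿ/n!` with `rₙ = (c - β)ₙ/(c)ₙ`: an average of `rₙ`
against the Poisson distribution of mean `z`. Log-convexity of `Γ` gives
`rₙ ≥ Γ(c)/Γ(c - β) · (c + n)^{-β}`, and since `n ↦ (c + n)^{-β}` is convex, Jensen's inequality
bounds the average below by `Γ(c)/Γ(c - β) · (c + z)^{-β}`. For `c = N/2` and
`z = |x|²/(4(t₀ + t))` this is the claim, as `(t₀ + t)(c + z) ≤ (c + 1)(t₀ + t + |x|²/4)`.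
-/

namespace Real

lemma Gamma_add_nat_eq_mul_ascPochhammer_eval {a : ℝ} (ha : 0 < a) (n : ℕ) :
    Gamma (a + n) = Gamma a * (ascPochhammer ℝ n).eval a := by
  induction n with
  | zero => simp
  | succ n ih =>
    rw [Nat.cast_succ, ← add_assoc, Gamma_add_one (by positivity : 0 < a + n).ne', ih,
      ascPochhammer_succ_eval]
    ring

lemma Gamma_add_le_mul_rpow {y β : ℝ} (hy : 0 < y) (hβ : 0 ≤ β) :
    Gamma (y + β) ≤ Gamma y * (y + β) ^ β := by
  rcases hβ.eq_or_lt with rfl | hβ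
  · simp
  have hyβ : 0 < y + β := by positivity
  -- the slope of `log ∘ Gamma` on `[y, y + β]` is at most its slope `log (y + β)` on
  -- `[y + β, y + β + 1]`
  have hslope := convexOn_log_Gamma.slope_mono_adjacent (x := y) (y := y + β) (z := y + β + 1)
    (Set.mem_Ioi.2 hy) (Set.mem_Ioi.2 (by linarith)) (by linarith) (by linarith)
  simp only [Function.comp_apply, Gamma_add_one hyβ.ne', log_mul hyβ.ne'
    (Gamma_pos_of_pos hyβ).ne', add_sub_cancel_left, add_sub_cancel_left, div_one] at hslope
  rw [div_le_iff₀ hβ] at hslope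
  have hpow : 0 < (y + β) ^ β := rpow_pos_of_pos hyβ β
  rw [← log_le_log_iff (Gamma_pos_of_pos hyβ) (mul_pos (Gamma_pos_of_pos hy) hpow),
    log_mul (Gamma_pos_of_pos hy).ne' hpow.ne', log_rpow hyβ]
  linarith

end Real

lemma ascPochhammer_eval_le_eval_of_le {a b : ℝ} (ha : 0 < a) (hab : a ≤ b) (n : ℕ) :
    (ascPochhammer ℝ n).eval a ≤ (ascPochhammer ℝ n).eval b := by
  induction n with
  | zero => simp
  | succ n ih =>
    simp only [ascPochhammer_succ_eval]
    have := (ascPochhammer_pos n a ha).le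
    have := (ascPochhammer_pos n b (ha.trans_le hab)).le
    gcongr

open Nat in
lemma hasSum_sub_mul_pow_div_factorial (z : ℝ) :
    HasSum (fun n : ℕ => (n - z) * z ^ n / n !) 0 := by
  have hexp : HasSum (fun n : ℕ => z ^ n / n !) (exp z) :=
    exp_eq_exp_ℝ ▸ NormedSpace.expSeries_div_hasSum_exp z
  have hshift : (fun n : ℕ => ((n + 1 : ℕ) : ℝ) * z ^ (n + 1) / (n + 1)!) =
      fun n : ℕ => z * (z ^ n / n !) := by
    ext n
    rw [Nat.factorial_succ, Nat.cast_mul, pow_succ]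
    field_simp
  have hmean : HasSum (fun n : ℕ => (n : ℝ) * z ^ n / n !) (z * exp z) := by
    rw [← hasSum_nat_add_iff' 1, hshift]
    simpa using hexp.mul_left z
  have hcentered : (fun n : ℕ => (n - z) * z ^ n / n !) =
      fun n : ℕ => (n : ℝ) * z ^ n / (n ! : ℝ) - z * (z ^ n / n !) := by
    ext n
    ring
  simpa [hcentered] using hmean.sub (hexp.mul_left z)

lemma rpow_neg_mul_one_sub_le_rpow_neg {x y β : ℝ} (hx : 0 < x) (hy : 0 < y) (hβ : 0 ≤ β) :
    y ^ (-β) * (1 - β * (x - y) / y) ≤ x ^ (-β) := by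
  have hxy : 0 < x / y := div_pos hx hy
  have hbern : 1 - β * (x - y) / y ≤ (x / y) ^ (-β) := by
    calc 1 - β * (x - y) / y = 1 - β * (x / y - 1) := by field_simp
      _ ≤ 1 - β * log (x / y) := by gcongr; exact log_le_sub_one_of_pos hxy
      _ ≤ exp (-β * log (x / y)) := by linarith [add_one_le_exp (-β * log (x / y))]
      _ = (x / y) ^ (-β) := by rw [rpow_def_of_pos hxy, mul_comm]
  calc y ^ (-β) * (1 - β * (x - y) / y) ≤ y ^ (-β) * (x / y) ^ (-β) := by gcongr
    _ = x ^ (-β) := by rw [div_rpow hx.le hy.le, mul_div_cancel₀ _ (rpow_pos_of_pos hy _).ne']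

lemma Gamma_div_mul_rpow_le_ascPochhammer_div {c β : ℝ} (hβ : 0 ≤ β) (hβc : β < c) (n : ℕ) :
    Gamma c / Gamma (c - β) * (c + n) ^ (-β) ≤
      (ascPochhammer ℝ n).eval (c - β) / (ascPochhammer ℝ n).eval c := by
  have ha : 0 < c - β := by linarith
  have hc : 0 < c := by linarith
  have hle := Gamma_add_le_mul_rpow (by positivity : 0 < c - β + n) hβ
  rw [show c - β + n + β = c + n by ring] at hle
  have hPa : (ascPochhammer ℝ n).eval (c - β) = Gamma (c - β + n) / Gamma (c - β) := by
    rw [Gamma_add_nat_eq_mul_ascPochhammer_eval ha,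
      mul_div_cancel_left₀ _ (Gamma_pos_of_pos ha).ne']
  have hPc : (ascPochhammer ℝ n).eval c = Gamma (c + n) / Gamma c := by
    rw [Gamma_add_nat_eq_mul_ascPochhammer_eval hc,
      mul_div_cancel_left₀ _ (Gamma_pos_of_pos hc).ne']
  have hGc := Gamma_pos_of_pos (by positivity : 0 < c + n)
  have key : (c + n) ^ (-β) ≤ Gamma (c - β + n) / Gamma (c + n) := by
    rw [rpow_neg (by positivity), inv_eq_one_div, div_le_div_iff₀ (by positivity) hGc]
    linarith
  calc Gamma c / Gamma (c - β) * (c + n) ^ (-β)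
      ≤ Gamma c / Gamma (c - β) * (Gamma (c - β + n) / Gamma (c + n)) := by
        have := Gamma_pos_of_pos hc
        have := Gamma_pos_of_pos ha
        gcongr
    _ = (ascPochhammer ℝ n).eval (c - β) / (ascPochhammer ℝ n).eval c := by
        rw [hPa, hPc]
        field_simp

open Nat in
lemma Gamma_div_mul_rpow_le_exp_neg_mul_kummerM {c β z : ℝ} (hβ : 0 ≤ β) (hβc : β < c)
    (hz : 0 ≤ z) : Gamma c / Gamma (c - β) * (c + z) ^ (-β) ≤ exp (-z) * kummerM (c - β) c z := by
  set r : ℕ → ℝ := fun n => (ascPochhammer ℝ n).eval (c - β) / (ascPochhammer ℝ n).eval c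
  set C := Gamma c / Gamma (c - β)
  have ha : 0 < c - β := by linarith
  have hc : 0 < c := by linarith
  have hr_nonneg (n : ℕ) : 0 ≤ r n :=
    div_nonneg (ascPochhammer_pos n _ ha).le (ascPochhammer_pos n _ hc).le
  have hr_le_one (n : ℕ) : r n ≤ 1 :=
    div_le_one_of_le₀ (ascPochhammer_eval_le_eval_of_le ha (by linarith) n)
      (ascPochhammer_pos n _ hc).le
  have hexp : HasSum (fun n : ℕ => z ^ n / n !) (exp z) :=
    exp_eq_exp_ℝ ▸ NormedSpace.expSeries_div_hasSum_exp z
  have hkummer : HasSum (fun n : ℕ => r n * z ^ n / n !) (kummerM (c - β) c z) := by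
    refine (Summable.of_nonneg_of_le (fun n => ?_) (fun n => ?_) hexp.summable).hasSum
    · have := hr_nonneg n
      positivity
    · rw [mul_div_assoc]
      exact mul_le_of_le_one_left (by positivity) (hr_le_one n)
  -- Jensen's inequality for the convex function `n ↦ (c + n) ^ (-β)` under the Poisson
  -- distribution of mean `z`, via its tangent line at `z`
  have htangent : HasSum
      (fun n : ℕ =>
        C * (c + z) ^ (-β) * (z ^ n / (n ! : ℝ) - β / (c + z) * ((n - z) * z ^ n / n !)))
      (C * (c + z) ^ (-β) * exp z) := by
    simpa using (hexp.sub ((hasSum_sub_mul_pow_div_factorial z).mul_left (β / (c + z)))).mul_left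
      (C * (c + z) ^ (-β))
  have hterm (n : ℕ) :
      C * (c + z) ^ (-β) * (z ^ n / (n ! : ℝ) - β / (c + z) * ((n - z) * z ^ n / n !)) ≤
        r n * z ^ n / n ! := by
    have hC : 0 ≤ C := div_nonneg (Gamma_pos_of_pos hc).le (Gamma_pos_of_pos ha).le
    calc C * (c + z) ^ (-β) * (z ^ n / (n ! : ℝ) - β / (c + z) * ((n - z) * z ^ n / n !))
        = C * ((c + z) ^ (-β) * (1 - β * ((c + n) - (c + z)) / (c + z))) * (z ^ n / n !) := by
          ring
      _ ≤ C * (c + n) ^ (-β) * (z ^ n / n !) := by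
          gcongr
          exact rpow_neg_mul_one_sub_le_rpow_neg (by positivity) (by positivity) hβ
      _ ≤ r n * z ^ n / n ! := by
          rw [mul_div_assoc]
          gcongr
          exact Gamma_div_mul_rpow_le_ascPochhammer_div hβ hβc n
  calc C * (c + z) ^ (-β) = exp (-z) * (C * (c + z) ^ (-β) * exp z) := by
        rw [exp_neg, inv_mul_eq_div, mul_div_cancel_right₀ _ (exp_pos z).ne']
    _ ≤ exp (-z) * kummerM (c - β) c z := by
        gcongr
        exact hasSum_le hterm htangent hkummer

lemma Gamma_div_mul_rpow_le_Phi {N : ℕ} {t₀ t β : ℝ} (hβ : 0 ≤ β) (hβN : β < (N : ℝ) / 2)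
    (x : EuclideanSpace ℝ (Fin N)) (hs : 0 < t₀ + t) :
    Gamma (N / 2) / Gamma (N / 2 - β) * (N / 2 + 1) ^ (-β) * (t₀ + t + ‖x‖ ^ 2 / 4) ^ (-β) ≤
      Phi N t₀ β x t := by
  set c : ℝ := N / 2
  set s := t₀ + t
  set z := ‖x‖ ^ 2 / (4 * s)
  have hc : 0 < c := by linarith
  have hz : 0 ≤ z := by positivity
  have hscale : s * (c + z) ≤ (c + 1) * (s + ‖x‖ ^ 2 / 4) := by
    have : s * z = ‖x‖ ^ 2 / 4 := by
      simp only [z]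
      field_simp
    nlinarith [sq_nonneg ‖x‖]
  calc Gamma c / Gamma (c - β) * (c + 1) ^ (-β) * (s + ‖x‖ ^ 2 / 4) ^ (-β)
      = Gamma c / Gamma (c - β) * ((c + 1) * (s + ‖x‖ ^ 2 / 4)) ^ (-β) := by
        rw [mul_rpow (by positivity) (by positivity), mul_assoc]
    _ ≤ Gamma c / Gamma (c - β) * (s * (c + z)) ^ (-β) := by
        have := Gamma_pos_of_pos hc
        have := Gamma_pos_of_pos (by linarith : 0 < c - β)
        exact mul_le_mul_of_nonneg_left
          (rpow_le_rpow_of_nonpos (by positivity) hscale (neg_nonpos.2 hβ)) (by positivity)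
    _ = s ^ (-β) * (Gamma c / Gamma (c - β) * (c + z) ^ (-β)) := by
        rw [mul_rpow hs.le (by positivity)]
        ring
    _ ≤ s ^ (-β) * (exp (-z) * kummerM (c - β) c z) :=
        mul_le_mul_of_nonneg_left (Gamma_div_mul_rpow_le_exp_neg_mul_kummerM hβ hβN hz)
          (by positivity)
    _ = Phi N t₀ β x t := by
        rw [Phi, mul_assoc, neg_div]

theorem Phi_lower_bound_general (N : ℕ) (β : ℝ) (hβ : 0 ≤ β) (hβ' : β < (N : ℝ) / 2) :
    ∃ c : ℝ, 0 < c ∧ ∀ t₀ : ℝ, 1 ≤ t₀ → ∀ (x : EuclideanSpace ℝ (Fin N)) (t : ℝ), 0 ≤ t →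
      c * (t₀ + t + ‖x‖ ^ 2 / 4) ^ (-β) ≤ Phi N t₀ β x t ∧ 0 < Phi N t₀ β x t := by
  have hc : 0 < (N : ℝ) / 2 - β := by linarith
  have hC : 0 < Gamma (N / 2) / Gamma (N / 2 - β) * (N / 2 + 1) ^ (-β) := by
    have := Gamma_pos_of_pos (by linarith : 0 < (N : ℝ) / 2)
    have := Gamma_pos_of_pos hc
    positivity
  refine ⟨_, hC, fun t₀ ht₀ x t ht => ?_⟩
  have hle := Gamma_div_mul_rpow_le_Phi hβ hβ' x (by linarith : 0 < t₀ + t)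
  exact ⟨hle, (mul_pos hC (rpow_pos_of_pos (by positivity) _)).trans_le hle⟩

/-- Lower bound: for `0 ≤ β < N/2`, `Φ_β(x,t) ≥ c_β (t₀+t+|x|²/4)^{-β}` with `c_β > 0`
depending only on `N, β`; in particular `Φ_β` is strictly positive. -/
theorem Phi_lower_bound (N : ℕ) (hN : 2 ≤ N) (β : ℝ) (hβ : 0 ≤ β) (hβ' : β < (N : ℝ) / 2) :
    ∃ c : ℝ, 0 < c ∧ ∀ t₀ : ℝ, 1 ≤ t₀ → ∀ (x : EuclideanSpace ℝ (Fin N)) (t : ℝ), 0 ≤ t →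
      c * (t₀ + t + ‖x‖ ^ 2 / 4) ^ (-β) ≤ Phi N t₀ β x t ∧ 0 < Phi N t₀ β x t :=
  Phi_lower_bound_general N β hβ hβ'
end
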